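/- (a) For every L ≥ 1, the complexity of η satisfies ℂ(L+1) − ℂ(L) ≥ 2. (b) For every n ≥ 2 and every L with 2ⁿ ≤ L ≤ 2ⁿ + 2ⁿ⁻¹ − 1, one has ℂ(L+1) − ℂ(L) ≥ 3. -/

import Mathlib

/-- The four-letter alphabet `A = {a, x, y, z}`. -/
inductive A : Type
  | a | x | y | z
  deriving DecidableEq, Repr

/-- The substitution `τ : a ↦ axa, x ↦ y, y ↦ z, z ↦ x`. -/
def tau : A → List A
  | A.a => [A.a, A.x, A.a]
  | A.x => [A.y]
  | A.y => [A.z]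
  | A.z => [A.x]

/-- The substitution `τ` extended to finite words by concatenation. -/
def tauW (w : List A) : List A := w.flatMap tau

/-- `pw n = τⁿ(a)`, a word of length `2^(n+1) - 1`. -/
def pw : ℕ → List A
  | 0 => [A.a]
  | n + 1 => tauW (pw n)

/-- The fixed point `η` of `τ`: the unique one-sided infinite word having every
`τⁿ(a)` as a prefix.  (Since `pw (n+1)` has length `2^(n+2) - 1 > n`, reading its
`n`-th letter is well defined and independent of the choice of a large enough iterate.) -/
def eta (n : ℕ) : A := (pw (n + 1)).getD n A.a

/-- `w` is a (finite) factor of `η`. -/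
def IsFactorEta (w : List A) : Prop :=
  ∃ i : ℕ, w = (List.range w.length).map (fun k => eta (i + k))

/-- The complexity function of `η`: the number of distinct factors of `η` of length `L`. -/
noncomputable def etaComplexity (L : ℕ) : ℕ :=
  {w : List A | w.length = L ∧ IsFactorEta w}.ncard


/-!
Write `η = a b₀ a b₁ a b₂ ⋯`. Since `τ` fixes `η`, the word `b` satisfies `b(2t) = x` and
`b(2t+1) = σ(b t)`, where `σ` is the cycle `x ↦ y ↦ z ↦ x`. Hence if `u c` is a factor of `b`,
so is `σ(u₀) x σ(u₁) x ⋯ σ(uₘ₋₁) x σ(c)`, also with an `x` in front; and interleaving a factor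
of `b` with `a`s gives a factor of `η` with at least the same right extensions. Starting from the
empty word, whose extensions in `b` are `x, y, z`, these doublings give a factor of every length
with three right extensions; starting from `xx`, with extensions `x` and `y`, they give a second,
different, right special factor for the lengths `2ⁿ ≤ L < 2ⁿ + 2ⁿ⁻¹`. Since every factor extends
to the right, `ℂ(L+1) - ℂ(L)` is the sum over the factors `w` of length `L` of
(number of extensions of `w`) - 1.
-/

open Function

section Factors

variable {α β : Type*}

def window (s : ℕ → α) (i n : ℕ) : List α := (List.range n).map fun k => s (i + k)

def IsFactor (s : ℕ → α) (w : List α) : Prop := ∃ i, w = window s i w.length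

def factors (s : ℕ → α) (L : ℕ) : Set (List α) := {w | w.length = L ∧ IsFactor s w}

def rightExt (s : ℕ → α) (w : List α) : Set α := {c | IsFactor s (w ++ [c])}

@[simp] lemma length_window (s : ℕ → α) (i n : ℕ) : (window s i n).length = n := by
  simp [window]

lemma window_add (s : ℕ → α) (i m n : ℕ) :
    window s i (m + n) = window s i m ++ window s (i + m) n := by
  simp [window, List.range_add, Nat.add_assoc]

lemma window_succ (s : ℕ → α) (i n : ℕ) : window s i (n + 1) = window s i n ++ [s (i + n)] := by
  rw [window_add]
  simp [window]

lemma getD_window (s : ℕ → α) (i : ℕ) {n k : ℕ} (hk : k < n) (d : α) :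
    (window s i n).getD k d = s (i + k) := by
  simp [window, hk]

lemma isFactor_window (s : ℕ → α) (i n : ℕ) : IsFactor s (window s i n) :=
  ⟨i, by rw [length_window]⟩

lemma IsFactor.of_infix {s : ℕ → α} {v w : List α} (hv : IsFactor s v) (h : w <:+: v) :
    IsFactor s w := by
  obtain ⟨p, q, rfl⟩ := h
  obtain ⟨i, hi⟩ := hv
  rw [List.length_append, List.length_append, window_add, window_add] at hi
  obtain ⟨hpw, -⟩ := List.append_inj hi (by simp)
  exact ⟨i + p.length, (List.append_inj hpw (by simp)).2⟩

lemma IsFactor.of_mem_rightExt {s : ℕ → α} {w : List α} {c : α} (h : c ∈ rightExt s w) :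
    IsFactor s w :=
  IsFactor.of_infix h (List.prefix_append w [c]).isInfix

lemma IsFactor.rightExt_nonempty {s : ℕ → α} {w : List α} (h : IsFactor s w) :
    (rightExt s w).Nonempty := by
  obtain ⟨i, hi⟩ := h
  refine ⟨s (i + w.length), i, ?_⟩
  rw [List.length_append, List.length_singleton, window_succ, ← hi]

lemma mem_factors_of_ncard_rightExt_pos {s : ℕ → α} {w : List α} {L : ℕ} (hw : w.length = L)
    (h : 0 < (rightExt s w).ncard) : w ∈ factors s L :=
  ⟨hw, IsFactor.of_mem_rightExt (Set.nonempty_of_ncard_ne_zero h.ne').some_mem⟩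

lemma finite_factors [Finite α] (s : ℕ → α) (L : ℕ) : (factors s L).Finite :=
  (List.finite_length_eq α L).subset fun _ hw => hw.1

/-- Fibre the factors of length `L + 1` over their prefixes of length `L`. -/
lemma ncard_factors_succ [Finite α] (s : ℕ → α) (L : ℕ) :
    (factors s (L + 1)).ncard = ∑ w ∈ (finite_factors s L).toFinset, (rightExt s w).ncard := by
  classical
  have hmaps : Set.MapsTo List.dropLast ((finite_factors s (L + 1)).toFinset : Set (List α))
      (finite_factors s L).toFinset := by
    intro v hv
    simp only [Finset.mem_coe, Set.Finite.mem_toFinset] at hv ⊢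
    obtain ⟨hlen, hv⟩ := hv
    exact ⟨by simp [hlen], hv.of_infix (List.dropLast_prefix v).isInfix⟩
  rw [Set.ncard_eq_toFinset_card _ (finite_factors s (L + 1)),
    Finset.card_eq_sum_card_fiberwise hmaps]
  refine Finset.sum_congr rfl fun w hw => ?_
  rw [Set.Finite.mem_toFinset] at hw
  have hfiber : (↑({v ∈ (finite_factors s (L + 1)).toFinset | v.dropLast = w}) : Set (List α))
      = (fun c => w ++ [c]) '' rightExt s w := by
    ext v
    simp only [Finset.coe_filter, Set.Finite.mem_toFinset, Set.mem_ofPred_eq, Set.mem_image]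
    constructor
    · rintro ⟨⟨hlen, hv⟩, rfl⟩
      have hne : v ≠ [] := List.ne_nil_of_length_pos (by omega)
      refine ⟨v.getLast hne, ?_, List.dropLast_append_getLast hne⟩
      simpa only [rightExt, Set.mem_ofPred_eq, List.dropLast_append_getLast hne] using hv
    · rintro ⟨c, hc, rfl⟩
      exact ⟨⟨by simp [hw.1], hc⟩, List.dropLast_concat⟩
  rw [← Set.ncard_coe_finset, hfiber,
    Set.ncard_image_of_injective _ fun c d h => by simpa using h]

lemma ncard_factors_add_sum_le [Finite α] (s : ℕ → α) {L : ℕ} {W : Finset (List α)}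
    (hW : ∀ w ∈ W, w ∈ factors s L) :
    (factors s L).ncard + ∑ w ∈ W, ((rightExt s w).ncard - 1) ≤ (factors s (L + 1)).ncard := by
  set T := (finite_factors s L).toFinset
  have hWT : W ⊆ T := fun w hw => (Set.Finite.mem_toFinset _).2 (hW w hw)
  have hpos : ∀ w ∈ T, 1 ≤ (rightExt s w).ncard := fun w hw =>
    (Set.ncard_pos).2 ((Set.Finite.mem_toFinset _).1 hw).2.rightExt_nonempty
  calc (factors s L).ncard + ∑ w ∈ W, ((rightExt s w).ncard - 1)
      ≤ ∑ w ∈ T, 1 + ∑ w ∈ T, ((rightExt s w).ncard - 1) := by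
        rw [Set.ncard_eq_toFinset_card _ (finite_factors s L), Finset.sum_const, smul_eq_mul,
          mul_one]
        exact Nat.add_le_add_left (Finset.sum_le_sum_of_subset hWT) _
    _ = ∑ w ∈ T, (rightExt s w).ncard := by
        rw [← Finset.sum_add_distrib]
        exact Finset.sum_congr rfl fun w hw => by have := hpos w hw; omega
    _ = (factors s (L + 1)).ncard := (ncard_factors_succ s L).symm

end Factors

section Interleave

variable {α β : Type*}

def interleave (f : β → α) (e : α) (u : List β) : List α := u.flatMap fun d => [f d, e]

variable {f : β → α} {e : α}

@[simp] lemma interleave_nil : interleave f e [] = [] := rfl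

@[simp] lemma interleave_cons (d : β) (u : List β) :
    interleave f e (d :: u) = f d :: e :: interleave f e u := rfl

@[simp] lemma interleave_append (u v : List β) :
    interleave f e (u ++ v) = interleave f e u ++ interleave f e v :=
  List.flatMap_append

@[simp] lemma length_interleave (u : List β) : (interleave f e u).length = 2 * u.length := by
  induction u with
  | nil => rfl
  | cons d u ih => simp only [interleave_cons, List.length_cons, ih]; ring

lemma interleave_injective (hf : Injective f) : Injective (interleave f e) := by
  intro u v h
  induction u generalizing v with
  | nil => cases v <;> simp_all
  | cons d u ih =>
    cases v with
    | nil => simp at h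
    | cons d' v =>
      simp only [interleave_cons, List.cons.injEq, true_and] at h
      rw [hf h.1, ih h.2]

def liftWord (f : β → α) (e : α) (L : ℕ) (u : List β) : List α :=
  if Even L then interleave f e u else e :: interleave f e u

lemma length_liftWord {L : ℕ} {u : List β} (hu : u.length = L / 2) :
    (liftWord f e L u).length = L := by
  unfold liftWord
  split_ifs with hL
  · simp only [length_interleave, hu]
    exact Nat.two_mul_div_two_of_even hL
  · simp only [List.length_cons, length_interleave, hu]
    exact Nat.two_mul_div_two_add_one_of_odd (Nat.not_even_iff_odd.1 hL)

lemma liftWord_injective (hf : Injective f) (L : ℕ) : Injective (liftWord f e L) := by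
  intro u v h
  unfold liftWord at h
  split_ifs at h
  · exact interleave_injective hf h
  · exact interleave_injective hf (List.cons_injective h)

lemma window_two_mul {s : ℕ → α} {t : ℕ → β} (hse : ∀ k, s (2 * k) = e)
    (hso : ∀ k, s (2 * k + 1) = f (t k)) (i n : ℕ) :
    window s (2 * i) (2 * n + 1) = e :: interleave f e (window t i n) := by
  induction n with
  | zero => simp [window, hse]
  | succ n ih =>
    rw [show 2 * (n + 1) + 1 = 2 * n + 1 + 2 by ring, window_add, ih, window_succ t,
      interleave_append]
    have hpair : window s (2 * i + (2 * n + 1)) 2 = [s (2 * (i + n) + 1), s (2 * (i + n + 1))] := by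
      rw [show 2 * i + (2 * n + 1) = 2 * (i + n) + 1 by ring]
      rfl
    simp [hpair, hso, hse]

/-- An occurrence of `u ++ [c]` at `i` in `t` gives one of `e :: interleave f e u ++ [f c]` at
`2 * i` in `s`. -/
lemma image_rightExt_subset {s : ℕ → α} {t : ℕ → β} (hse : ∀ k, s (2 * k) = e)
    (hso : ∀ k, s (2 * k + 1) = f (t k)) (L : ℕ) (u : List β) :
    f '' rightExt t u ⊆ rightExt s (liftWord f e L u) := by
  rintro _ ⟨c, ⟨i, hi⟩, rfl⟩
  have hwin : window s (2 * i) (2 * (u ++ [c]).length + 1)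
      = e :: interleave f e u ++ [f c] ++ [e] := by
    rw [window_two_mul hse hso, ← hi]
    simp
  have hfac : IsFactor s (e :: interleave f e u ++ [f c]) :=
    (isFactor_window s _ _).of_infix (hwin ▸ (List.prefix_append _ _).isInfix)
  refine hfac.of_infix ?_
  unfold liftWord
  split_ifs
  · exact (List.suffix_cons _ _).isInfix
  · exact List.infix_refl _

end Interleave

instance : Fintype A := ⟨{A.a, A.x, A.y, A.z}, fun c => by cases c <;> simp⟩

def cycXYZ : A → A
  | A.a => A.a
  | A.x => A.y
  | A.y => A.z
  | A.z => A.x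

lemma cycXYZ_injective : Injective cycXYZ := by decide

lemma cycXYZ_ne_a {c : A} (h : c ≠ A.a) : cycXYZ c ≠ A.a := by
  cases c <;> simp_all [cycXYZ]

lemma tau_of_ne_a {c : A} (h : c ≠ A.a) : tau c = [cycXYZ c] := by
  cases c <;> simp_all [tau, cycXYZ]

lemma image_cycXYZ_xyz : cycXYZ '' {A.x, A.y, A.z} = {A.x, A.y, A.z} := by
  simp only [Set.image_insert_eq, Set.image_singleton, cycXYZ]
  ext c
  cases c <;> simp

def etaOdd (n : ℕ) : A :=
  if h : n % 2 = 0 then A.x else cycXYZ (etaOdd (n / 2))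
decreasing_by omega

lemma etaOdd_two_mul (k : ℕ) : etaOdd (2 * k) = A.x := by
  rw [etaOdd]
  simp

lemma etaOdd_two_mul_add_one (k : ℕ) : etaOdd (2 * k + 1) = cycXYZ (etaOdd k) := by
  rw [etaOdd, dif_neg (by omega), show (2 * k + 1) / 2 = k by omega]

lemma etaOdd_ne_a (n : ℕ) : etaOdd n ≠ A.a := by
  induction n using Nat.strong_induction_on with
  | _ n ih =>
    rw [etaOdd]
    split_ifs with h
    · simp
    · exact cycXYZ_ne_a (ih _ (by omega))

def etaExplicit (n : ℕ) : A := if n % 2 = 0 then A.a else etaOdd (n / 2)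

lemma etaExplicit_two_mul (k : ℕ) : etaExplicit (2 * k) = A.a := by
  simp [etaExplicit]

lemma etaExplicit_two_mul_add_one (k : ℕ) : etaExplicit (2 * k + 1) = etaOdd k := by
  rw [etaExplicit, if_neg (by omega), show (2 * k + 1) / 2 = k by omega]

lemma tauW_interleave {u : List A} (hu : ∀ d ∈ u, d ≠ A.a) :
    tauW (interleave id A.a u) = interleave id A.a (interleave cycXYZ A.x u) := by
  induction u with
  | nil => rfl
  | cons d u ih =>
    simp only [List.mem_cons, forall_eq_or_imp] at hu
    simp only [tauW, interleave_cons, List.flatMap_cons, id] at ih ⊢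
    rw [ih hu.2, tau_of_ne_a hu.1]
    rfl

lemma pw_eq_window (n : ℕ) : pw n = window etaExplicit 0 (2 ^ (n + 1) - 1) := by
  induction n with
  | zero => simp [pw, window, etaExplicit]
  | succ n ih =>
    have h1 : 1 ≤ 2 ^ n := Nat.one_le_two_pow
    have hn : 2 ^ (n + 1) - 1 = 2 * (2 ^ n - 1) + 1 := by rw [pow_succ]; omega
    have hn' : 2 ^ (n + 1 + 1) - 1 = 2 * (2 * (2 ^ n - 1) + 1) + 1 := by
      rw [pow_succ, pow_succ]; omega
    have hexp := window_two_mul (f := id) etaExplicit_two_mul etaExplicit_two_mul_add_one 0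
    have hodd := window_two_mul etaOdd_two_mul etaOdd_two_mul_add_one 0
    rw [mul_zero] at hexp hodd
    rw [pw, ih, hn, hn', hexp, hexp, hodd, interleave_cons,
      ← tauW_interleave fun d hd => ?_]
    · rfl
    · obtain ⟨k, -, rfl⟩ := List.mem_map.1 hd
      exact etaOdd_ne_a _

lemma eta_eq_etaExplicit : eta = etaExplicit := by
  funext n
  have : n < 2 ^ (n + 1 + 1) - 1 := by
    have := Nat.lt_two_pow_self (n := n)
    rw [pow_succ, pow_succ]
    omega
  rw [eta, pw_eq_window, getD_window _ _ this, Nat.zero_add]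

lemma eta_two_mul (k : ℕ) : eta (2 * k) = A.a := by
  rw [eta_eq_etaExplicit, etaExplicit_two_mul]

lemma eta_two_mul_add_one (k : ℕ) : eta (2 * k + 1) = etaOdd k := by
  rw [eta_eq_etaExplicit, etaExplicit_two_mul_add_one]

lemma rightExt_etaOdd_subset_rightExt_eta (L : ℕ) (u : List A) :
    rightExt etaOdd u ⊆ rightExt eta (liftWord id A.a L u) := by
  simpa using image_rightExt_subset (f := id) eta_two_mul eta_two_mul_add_one L u

lemma ncard_rightExt_etaOdd_le (L : ℕ) (u : List A) :
    (rightExt etaOdd u).ncard ≤ (rightExt eta (liftWord id A.a L u)).ncard :=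
  Set.ncard_le_ncard (rightExt_etaOdd_subset_rightExt_eta L u)

lemma liftWord_mem_factors_eta {L : ℕ} {u : List A} (hu : u.length = L / 2)
    (h : 0 < (rightExt etaOdd u).ncard) : liftWord id A.a L u ∈ factors eta L :=
  mem_factors_of_ncard_rightExt_pos (length_liftWord hu)
    (h.trans_le (ncard_rightExt_etaOdd_le L u))

lemma image_cycXYZ_rightExt_subset (L : ℕ) (u : List A) :
    cycXYZ '' rightExt etaOdd u ⊆ rightExt etaOdd (liftWord cycXYZ A.x L u) :=
  image_rightExt_subset etaOdd_two_mul etaOdd_two_mul_add_one L u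

/-- The reversal of the prefix of length `m` of `etaOdd`. -/
def rightSpecialOdd : ℕ → List A
  | 0 => []
  | m + 1 => liftWord cycXYZ A.x (m + 1) (rightSpecialOdd ((m + 1) / 2))
decreasing_by omega

lemma rightSpecialOdd_zero : rightSpecialOdd 0 = [] := by
  rw [rightSpecialOdd]

lemma rightSpecialOdd_eq (m : ℕ) :
    rightSpecialOdd m = liftWord cycXYZ A.x m (rightSpecialOdd (m / 2)) := by
  cases m with
  | zero => simp [rightSpecialOdd_zero, liftWord]
  | succ m => rw [rightSpecialOdd]

lemma length_rightSpecialOdd (m : ℕ) : (rightSpecialOdd m).length = m := by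
  induction m using Nat.strong_induction_on with
  | _ m ih =>
    rcases Nat.eq_zero_or_pos m with rfl | hm
    · rw [rightSpecialOdd_zero, List.length_nil]
    · rw [rightSpecialOdd_eq]
      exact length_liftWord (ih _ (Nat.div_lt_self hm one_lt_two))

lemma xyz_subset_rightExt_rightSpecialOdd (m : ℕ) :
    {A.x, A.y, A.z} ⊆ rightExt etaOdd (rightSpecialOdd m) := by
  induction m using Nat.strong_induction_on with
  | _ m ih =>
    rcases Nat.eq_zero_or_pos m with rfl | hm
    · have hletter : ∀ i, etaOdd i ∈ rightExt etaOdd (rightSpecialOdd 0) := fun i =>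
        ⟨i, by simp [rightSpecialOdd_zero, window]⟩
      rintro c (rfl | rfl | rfl)
      · simpa [etaOdd] using hletter 0
      · simpa [etaOdd, cycXYZ] using hletter 1
      · simpa [etaOdd, cycXYZ] using hletter 3
    · rw [rightSpecialOdd_eq, ← image_cycXYZ_xyz]
      exact (Set.image_mono (ih _ (Nat.div_lt_self hm one_lt_two))).trans
        (image_cycXYZ_rightExt_subset m _)

lemma exists_rightSpecial_ne_rightSpecialOdd (j m : ℕ) (hm : m / 2 ^ j = 2) :
    ∃ w : List A, w.length = m ∧ w ≠ rightSpecialOdd m ∧ 2 ≤ (rightExt etaOdd w).ncard := by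
  induction j generalizing m with
  | zero =>
    rw [pow_zero, Nat.div_one] at hm
    subst hm
    refine ⟨[A.x, A.x], rfl, ?_, ?_⟩
    · simp [rightSpecialOdd_eq 2, rightSpecialOdd_eq 1, rightSpecialOdd_zero, liftWord, cycXYZ]
    · have hxy : {A.x, A.y} ⊆ rightExt etaOdd [A.x, A.x] := by
        rintro c (rfl | rfl)
        · exact ⟨6, show _ = [etaOdd 6, etaOdd 7, etaOdd 8] by simp [etaOdd, cycXYZ]⟩
        · exact ⟨7, show _ = [etaOdd 7, etaOdd 8, etaOdd 9] by simp [etaOdd, cycXYZ]⟩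
      exact (Set.ncard_pair (by decide)).symm.le.trans (Set.ncard_le_ncard hxy)
  | succ j ih =>
    obtain ⟨w, hlen, hne, htwo⟩ := ih (m / 2) (by rwa [Nat.div_div_eq_div_mul, ← pow_succ'])
    refine ⟨liftWord cycXYZ A.x m w, length_liftWord hlen, ?_, ?_⟩
    · rw [rightSpecialOdd_eq]
      exact (liftWord_injective cycXYZ_injective m).ne hne
    · calc 2 ≤ (rightExt etaOdd w).ncard := htwo
        _ = (cycXYZ '' rightExt etaOdd w).ncard :=
          (Set.ncard_image_of_injective _ cycXYZ_injective).symm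
        _ ≤ _ := Set.ncard_le_ncard (image_cycXYZ_rightExt_subset m w)

lemma three_le_ncard_rightExt_rightSpecialOdd (m : ℕ) :
    3 ≤ (rightExt etaOdd (rightSpecialOdd m)).ncard :=
  calc 3 = ({A.x, A.y, A.z} : Set A).ncard :=
        (Set.ncard_eq_three.2 ⟨_, _, _, by decide, by decide, by decide, rfl⟩).symm
    _ ≤ _ := Set.ncard_le_ncard (xyz_subset_rightExt_rightSpecialOdd m)

lemma div_two_div_two_pow_eq_two {k L : ℕ} (hlo : 2 ^ (k + 2) ≤ L)
    (hhi : L ≤ 2 ^ (k + 2) + 2 ^ (k + 1) - 1) : L / 2 / 2 ^ k = 2 := by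
  rw [Nat.div_div_eq_div_mul, ← pow_succ']
  simp only [pow_succ] at hlo hhi ⊢
  exact Nat.div_eq_of_lt_le (by linarith) (by have := Nat.one_le_two_pow (n := k); omega)

lemma etaComplexity_eq (L : ℕ) : etaComplexity L = (factors eta L).ncard := rfl

/-- **Lower bounds on the complexity difference**:
(a) `ℂ(L+1) - ℂ(L) ≥ 2` for every `L ≥ 1`;
(b) `ℂ(L+1) - ℂ(L) ≥ 3` whenever `2^n ≤ L ≤ 2^n + 2^(n-1) - 1` for some `n ≥ 2`. -/
theorem complexity_difference_lower_bounds :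
    (∀ L : ℕ, 1 ≤ L → etaComplexity L + 2 ≤ etaComplexity (L + 1)) ∧
    (∀ n L : ℕ, 2 ≤ n → 2 ^ n ≤ L → L ≤ 2 ^ n + 2 ^ (n - 1) - 1 →
      etaComplexity L + 3 ≤ etaComplexity (L + 1)) := by
  have hthree (L : ℕ) := three_le_ncard_rightExt_rightSpecialOdd (L / 2)
  have hmem (L : ℕ) := liftWord_mem_factors_eta (length_rightSpecialOdd (L / 2))
    (by have := hthree L; omega)
  have hext (L : ℕ) := (hthree L).trans (ncard_rightExt_etaOdd_le L _)
  refine ⟨fun L _ => ?_, fun n L hn hlo hhi => ?_⟩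
  · have := ncard_factors_add_sum_le eta (W := {_}) (by simpa using hmem L)
    rw [Finset.sum_singleton] at this
    have := hext L
    rw [etaComplexity_eq, etaComplexity_eq]
    omega
  · obtain ⟨k, rfl⟩ : ∃ k, n = k + 2 := ⟨n - 2, by omega⟩
    obtain ⟨w, hlen, hne, htwo⟩ :=
      exists_rightSpecial_ne_rightSpecialOdd k (L / 2) (div_two_div_two_pow_eq_two hlo hhi)
    have hw := liftWord_mem_factors_eta hlen (by omega)
    have hne' := (liftWord_injective (e := A.a) injective_id L).ne hne
    have := ncard_factors_add_sum_le eta (L := L)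
      (W := {liftWord id A.a L w, liftWord id A.a L (rightSpecialOdd (L / 2))})
      (by simp [hw, hmem L])
    rw [Finset.sum_pair hne'] at this
    have := hext L
    have := htwo.trans (ncard_rightExt_etaOdd_le L w)
    rw [etaComplexity_eq, etaComplexity_eq]
    omega
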